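/- Soundness of the quantitative semantics for violation: for every STL formula φ, every signal ξ : ℕ → ℝⁿ, and every time index k ∈ ℕ, if ρ^φ(ξ, k) < 0 then (ξ, k) ⊭ φ, i.e., it is not the case that (ξ, k) ⊨ φ. -/
import Mathlib


inductive STL (X : Type) : Type where
  | atom : (X → ℝ) → STL X
  | not : STL X → STL X
  | and : STL X → STL X → STL X
  | ev : (a b : ℕ) → a ≤ b → STL X → STL X
  | untl : (a b : ℕ) → a ≤ b → STL X → STL X → STL X

def Sat {X : Type} (ξ : ℕ → X) : STL X → ℕ → Prop
  | .atom μ, k => μ (ξ k) > 0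
  | .not φ, k => ¬ Sat ξ φ k
  | .and φ ψ, k => Sat ξ φ k ∧ Sat ξ ψ k
  | .ev a b _ φ, k => ∃ k', k + a ≤ k' ∧ k' ≤ k + b ∧ Sat ξ φ k'
  | .untl a b _ φ ψ, k => ∃ k', k + a ≤ k' ∧ k' ≤ k + b ∧ Sat ξ ψ k' ∧
      ∀ k'', k ≤ k'' → k'' ≤ k' → Sat ξ φ k''

noncomputable def Rob {X : Type} (ξ : ℕ → X) : STL X → ℕ → ℝ
  | .atom μ, k => μ (ξ k)
  | .not φ, k => - Rob ξ φ k
  | .and φ ψ, k => min (Rob ξ φ k) (Rob ξ ψ k)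
  | .ev a b h φ, k => (Finset.Icc (k + a) (k + b)).sup'
      (Finset.nonempty_Icc.mpr (by omega)) (fun k' => Rob ξ φ k')
  | .untl a b h φ ψ, k => (Finset.Icc (k + a) (k + b)).sup'
      (Finset.nonempty_Icc.mpr (by omega)) (fun k' =>
        min (Rob ξ ψ k')
          ((insert k (Finset.Icc k k')).inf' (Finset.insert_nonempty _ _)
            (fun k'' => Rob ξ φ k'')))

def bound {X : Type} : STL X → ℕ
  | .atom _ => 0
  | .not φ => bound φ
  | .and φ ψ => max (bound φ) (bound ψ)
  | .ev _ b _ φ => b + bound φ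
  | .untl _ b _ φ ψ => b + max (bound φ) (bound ψ)

lemma rob_sound {X : Type} (ξ : ℕ → X) (φ : STL X) :
    ∀ k, (Rob ξ φ k > 0 → Sat ξ φ k) ∧ (Rob ξ φ k < 0 → ¬ Sat ξ φ k) := by
  induction φ with
  | atom μ => intro k; simp [Rob, Sat]; intro h; linarith
  | not φ ih =>
    intro k
    constructor
    · intro h; exact (ih k).2 (by simp [Rob] at h; linarith)
    · intro h hs; exact hs ((ih k).1 (by simp [Rob] at h; linarith))
  | and φ ψ ihφ ihψ =>
    intro k
    constructor
    · intro h
      simp [Rob, lt_min_iff] at h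
      exact ⟨(ihφ k).1 h.1, (ihψ k).1 h.2⟩
    · intro h hs
      simp [Rob, min_lt_iff] at h
      rcases h with h | h
      · exact (ihφ k).2 h hs.1
      · exact (ihψ k).2 h hs.2
  | ev a b hab φ ih =>
    intro k
    constructor
    · intro h
      simp only [Rob, Finset.lt_sup'_iff] at h
      obtain ⟨k', hk', hr⟩ := h
      rw [Finset.mem_Icc] at hk'
      exact ⟨k', hk'.1, hk'.2, (ih k').1 hr⟩
    · intro h hs
      obtain ⟨k', h1, h2, hsφ⟩ := hs
      simp only [Rob, Finset.sup'_lt_iff] at h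
      have := h k' (Finset.mem_Icc.mpr ⟨h1, h2⟩)
      exact (ih k').2 this hsφ
  | untl a b hab φ ψ ihφ ihψ =>
    intro k
    constructor
    · intro h
      simp only [Rob, Finset.lt_sup'_iff] at h
      obtain ⟨k', hk', hr⟩ := h
      rw [Finset.mem_Icc] at hk'
      rw [lt_min_iff] at hr
      refine ⟨k', hk'.1, hk'.2, (ihψ k').1 hr.1, ?_⟩
      intro k'' h1 h2
      have := Finset.inf'_le (f := fun k'' => Rob ξ φ k'')
        (b := k'') (s := insert k (Finset.Icc k k'))
        (Finset.mem_insert.mpr (Or.inr (Finset.mem_Icc.mpr ⟨h1, h2⟩)))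
      exact (ihφ k'').1 (lt_of_lt_of_le hr.2 this)
    · intro h hs
      obtain ⟨k', h1, h2, hsψ, hall⟩ := hs
      simp only [Rob, Finset.sup'_lt_iff] at h
      have := h k' (Finset.mem_Icc.mpr ⟨h1, h2⟩)
      rw [min_lt_iff] at this
      rcases this with hlt | hlt
      · exact (ihψ k').2 hlt hsψ
      · rw [Finset.inf'_lt_iff] at hlt
        obtain ⟨k'', hk'', hr⟩ := hlt
        rw [Finset.mem_insert, Finset.mem_Icc] at hk''
        have hmem : k ≤ k'' ∧ k'' ≤ k' := by
          rcases hk'' with rfl | hk''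
          · exact ⟨le_refl _, le_trans (by omega) h1⟩
          · exact hk''
        exact (ihφ k'').2 hr (hall k'' hmem.1 hmem.2)

/-- soundness of the quantitative semantics for violation: negative
robustness implies non-satisfaction. -/
theorem rob_neg_implies_not_sat {n : ℕ} (φ : STL (Fin n → ℝ))
    (ξ : ℕ → Fin n → ℝ) (k : ℕ) (h : Rob ξ φ k < 0) :
    ¬ Sat ξ φ k :=
  (rob_sound ξ φ k).2 h
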